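/- Let (m₁,m₂,m₃,ξ,p) be a collision solution of the reduced two-body system on [t₀, t*) with t* < ∞ and ξ(t) → +∞ as t → t*⁻. Then p ∼ −√ξ in the strong sense that the ratio p/√ξ is eventually bounded and bounded away from zero: there exist t₁ ∈ [t₀, t*) and constants 0 < δ ≤ M such that −M ≤ p(t)/√(ξ(t)) ≤ −δ for all t ∈ [t₁, t*). -/

import Mathlib

/-!
Both `m₁² + m₂² + m₃²` and the energy `E = p² - m₁p + m₃²ξ² - m₂m₃ξ - ξ` are first integrals,
so near the collision they are negligible against `ξ`. The energy then gives `p² ≤ 4ξ`,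
i.e. `p / √ξ ≥ -2`. For the other bound, `z = p / √ξ` is increasing, and even `z - (log ξ)/16`
is nondecreasing, while `|z| ≤ 1/2`; so each level in `[-1/2, 1/2]` can be crossed only upwards.
If `z > -1/2` at some time, then either `z` stays in `[-1/2, 1/2)` and `log ξ → ∞` pushes it
past `1/2`, or it reaches `1/2` and stays above, where `ξ̇ ≤ 0` contradicts `ξ → ∞`.
-/

open Filter Set Topology Real

lemma eq_of_hasDerivAt_eq_zero_Ico {f : ℝ → ℝ} {a b : ℝ}
    (hf : ∀ t ∈ Ico a b, HasDerivAt f 0 t) : ∀ t ∈ Ico a b, f t = f a := fun t ht =>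
  constant_of_has_deriv_right_zero
    (fun s hs => (hf s ⟨hs.1, hs.2.trans_lt ht.2⟩).continuousAt.continuousWithinAt)
    (fun s hs => (hf s ⟨hs.1, hs.2.trans ht.2⟩).hasDerivWithinAt) t ⟨ht.1, le_rfl⟩

lemma monotoneOn_Ico_of_hasDerivAt_nonneg {f f' : ℝ → ℝ} {a b : ℝ}
    (hf : ∀ t ∈ Ico a b, HasDerivAt f (f' t) t) (hf' : ∀ t ∈ Ico a b, 0 ≤ f' t) :
    MonotoneOn f (Ico a b) :=
  monotoneOn_of_hasDerivWithinAt_nonneg (convex_Ico a b)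
    (fun t ht => (hf t ht).continuousAt.continuousWithinAt)
    (fun t ht => (hf t (interior_subset ht)).hasDerivWithinAt)
    (fun t ht => hf' t (interior_subset ht))

lemma le_of_hasDerivAt_pos_of_eq {f f' : ℝ → ℝ} {a b c : ℝ}
    (hf : ∀ t ∈ Ico a b, HasDerivAt f (f' t) t) (hc : ∀ t ∈ Ico a b, f t = c → 0 < f' t)
    (ha : c ≤ f a) : ∀ t ∈ Ico a b, c ≤ f t := fun _ ht =>
  image_le_of_deriv_right_lt_deriv_boundary' (f := fun _ => c) (f' := fun _ => 0)
    continuousOn_const (fun s _ => hasDerivWithinAt_const s _ c) ha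
    (fun s hs => (hf s ⟨hs.1, hs.2.trans_lt ht.2⟩).continuousAt.continuousWithinAt)
    (fun s hs => (hf s ⟨hs.1, hs.2.trans ht.2⟩).hasDerivWithinAt)
    (fun s hs hfs => hc s ⟨hs.1, hs.2.trans ht.2⟩ hfs.symm) ⟨ht.1, le_rfl⟩

lemma tendsto_atTop_of_monotoneOn_sub {f g : ℝ → ℝ} {u b : ℝ} (hu : u < b)
    (hfg : MonotoneOn (fun t => f t - g t) (Ico u b)) (hg : Tendsto g (𝓝[<] b) atTop) :
    Tendsto f (𝓝[<] b) atTop := by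
  refine tendsto_atTop_mono' _ ?_ (tendsto_atTop_add_const_left _ (f u - g u) hg)
  filter_upwards [Ico_mem_nhdsLT hu] with t ht
  have := hfg ⟨le_rfl, hu⟩ ht ht.1
  simp only at this
  linarith

lemma exists_forall_Ico_of_eventually_nhdsLT {P : ℝ → Prop} {a b : ℝ} (hab : a < b)
    (h : ∀ᶠ t in 𝓝[<] b, P t) : ∃ c ∈ Ico a b, ∀ t ∈ Ico c b, P t := by
  obtain ⟨l, hl, hsub⟩ := mem_nhdsLT_iff_exists_Ico_subset.1 h
  exact ⟨max a l, ⟨le_max_left _ _, max_lt hab hl⟩,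
    fun t ht => hsub ⟨(le_max_right _ _).trans ht.1, ht.2⟩⟩

theorem HasDerivAt.div_sqrt {f g : ℝ → ℝ} {f' g' x : ℝ} (hf : HasDerivAt f f' x)
    (hg : HasDerivAt g g' x) (hx : 0 < g x) :
    HasDerivAt (fun t => f t / √(g t)) ((2 * g x * f' - f x * g') / (2 * g x * √(g x))) x := by
  refine (hf.fun_div (hg.sqrt hx.ne') (sqrt_pos.2 hx).ne').congr_deriv ?_
  have := sqrt_pos.2 hx
  field_simp
  rw [sq_sqrt hx.le]
  ring

lemma sq_le_div_four_of_abs_div_sqrt_le {x y : ℝ} (hx : 0 < x) (h : |y / √x| ≤ 1 / 2) :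
    y ^ 2 ≤ x / 4 := by
  have hy : |y| ≤ √x / 2 := by
    rwa [abs_div, abs_of_pos (sqrt_pos.2 hx), div_le_iff₀ (sqrt_pos.2 hx), one_div_mul_eq_div]
      at h
  nlinarith [sq_abs y, sq_sqrt hx.le, abs_nonneg y]

def xiDot (m1 xi p : ℝ) : ℝ := -(xi ^ 2 + 1) * (2 * p - m1)

def pDot (m2 m3 xi : ℝ) : ℝ := -(xi ^ 2 + 1) * (1 + m2 * m3 - 2 * m3 ^ 2 * xi)

def energy (m1 m2 m3 xi p : ℝ) : ℝ := p ^ 2 - m1 * p + m3 ^ 2 * xi ^ 2 - m2 * m3 * xi - xi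

/-- `2ξṗ - pξ̇` is the numerator of `(p / √ξ)' = (2ξṗ - pξ̇) / (2ξ√ξ)`; the energy turns it
into a quantity that is large and positive as soon as `p² ≤ ξ / 4`. -/
lemma two_mul_mul_pDot_sub_mul_xiDot (m1 m2 m3 xi p : ℝ) :
    2 * xi * pDot m2 m3 xi - p * xiDot m1 xi p =
      (xi ^ 2 + 1) * (2 * m3 ^ 2 * xi ^ 2 + 2 * energy m1 m2 m3 xi p + m1 * p) := by
  unfold pDot xiDot energy
  ring

structure IsNearCollision (m1 m2 m3 xi p : ℝ) : Prop where
  pos : 0 < xi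
  sq_le : m1 ^ 2 + m2 ^ 2 + m3 ^ 2 ≤ xi / 1600
  abs_energy_le : |energy m1 m2 m3 xi p| ≤ xi / 16

namespace IsNearCollision

variable {m1 m2 m3 xi p : ℝ}

lemma sq_add_sq_le (h : IsNearCollision m1 m2 m3 xi p) : p ^ 2 + (m3 * xi) ^ 2 ≤ 4 * xi := by
  have hE := (abs_le.1 h.abs_energy_le).2
  have hEdef : energy m1 m2 m3 xi p = p ^ 2 - m1 * p + m3 ^ 2 * xi ^ 2 - m2 * m3 * xi - xi := rfl
  nlinarith [h.sq_le, h.pos, sq_nonneg m1, sq_nonneg m2, sq_nonneg m3, sq_nonneg (m1 - p),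
    sq_nonneg (m2 - m3 * xi)]

lemma neg_two_le_div_sqrt (h : IsNearCollision m1 m2 m3 xi p) : -2 ≤ p / √xi := by
  have hr := sqrt_pos.2 h.pos
  rw [le_div_iff₀ hr]
  nlinarith [h.sq_add_sq_le, sq_nonneg (m3 * xi), sq_sqrt h.pos.le, sq_nonneg (p + 2 * √xi)]

lemma forty_mul_le_sqrt (h : IsNearCollision m1 m2 m3 xi p) : 40 * m1 ≤ √xi :=
  (le_abs_self _).trans (abs_le_sqrt (by nlinarith [h.sq_le, sq_nonneg m2, sq_nonneg m3]))

lemma xi_div_four_le (h : IsNearCollision m1 m2 m3 xi p) (hp : p ^ 2 ≤ xi / 4) :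
    xi / 4 ≤ 2 * m3 ^ 2 * xi ^ 2 + 2 * energy m1 m2 m3 xi p + m1 * p := by
  have hE := abs_le.1 h.abs_energy_le
  have hEdef : energy m1 m2 m3 xi p = p ^ 2 - m1 * p + m3 ^ 2 * xi ^ 2 - m2 * m3 * xi - xi := rfl
  have hm1p : -(xi / 80) ≤ m1 * p := by
    nlinarith [sq_nonneg (p + 20 * m1), h.sq_le, sq_nonneg m2, sq_nonneg m3]
  have hm2m3 : -(xi / 16) ≤ m2 * m3 * xi := by
    nlinarith [sq_nonneg (40 * m2 + m3 * xi), h.sq_le, h.sq_add_sq_le, sq_nonneg m1, sq_nonneg m3]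
  nlinarith [sq_nonneg (m3 * xi)]

lemma two_mul_mul_pDot_sub_pos (h : IsNearCollision m1 m2 m3 xi p) (hp : |p / √xi| ≤ 1 / 2) :
    0 < 2 * xi * pDot m2 m3 xi - p * xiDot m1 xi p := by
  rw [two_mul_mul_pDot_sub_mul_xiDot]
  have := h.xi_div_four_le (sq_le_div_four_of_abs_div_sqrt_le h.pos hp)
  exact mul_pos (by positivity) (by linarith [h.pos])

lemma xiDot_div_le (h : IsNearCollision m1 m2 m3 xi p) (hp : |p / √xi| ≤ 1 / 2) :
    xiDot m1 xi p / xi / 16 ≤ (2 * xi * pDot m2 m3 xi - p * xiDot m1 xi p) / (2 * xi * √xi) := by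
  have hp2 := sq_le_div_four_of_abs_div_sqrt_le h.pos hp
  have hr := sqrt_pos.2 h.pos
  have hr2 := sq_sqrt h.pos.le
  have hm1 := h.forty_mul_le_sqrt
  have hB := h.xi_div_four_le hp2
  have hsqrt : √xi * (m1 - 2 * p) ≤ 2 * xi := by
    nlinarith [sq_nonneg (2 * p + √xi)]
  have key : √xi * xiDot m1 xi p ≤ 8 * (2 * xi * pDot m2 m3 xi - p * xiDot m1 xi p) := by
    rw [two_mul_mul_pDot_sub_mul_xiDot]
    have hx2 : 0 ≤ xi ^ 2 + 1 := by positivity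
    unfold xiDot
    nlinarith [mul_le_mul_of_nonneg_left hB hx2, mul_le_mul_of_nonneg_left hsqrt hx2]
  have hx := h.pos
  rw [div_div, div_le_div_iff₀ (by positivity) (by positivity)]
  nlinarith [mul_le_mul_of_nonneg_left key (by positivity : (0 : ℝ) ≤ 2 * xi)]

lemma xiDot_nonpos (h : IsNearCollision m1 m2 m3 xi p) (hp : 1 / 2 ≤ p / √xi) :
    xiDot m1 xi p ≤ 0 := by
  have hr := sqrt_pos.2 h.pos
  rw [le_div_iff₀ hr] at hp
  unfold xiDot
  nlinarith [h.forty_mul_le_sqrt, sq_nonneg xi]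

end IsNearCollision

structure IsReducedTwoBodySolution (a b : ℝ) (m1 m2 m3 xi p : ℝ → ℝ) : Prop where
  hasDerivAt_m1 : ∀ t ∈ Ico a b,
    HasDerivAt m1 (xi t * (-(m2 t)^2 + (m3 t)^2 + 2 * m2 t * m3 t * xi t)) t
  hasDerivAt_m2 : ∀ t ∈ Ico a b,
    HasDerivAt m2 (m1 t * m2 t * xi t - m3 t * p t - 2 * m1 t * m3 t * (xi t)^2) t
  hasDerivAt_m3 : ∀ t ∈ Ico a b, HasDerivAt m3 (m2 t * p t - m1 t * m3 t * xi t) t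
  hasDerivAt_xi : ∀ t ∈ Ico a b, HasDerivAt xi (xiDot (m1 t) (xi t) (p t)) t
  hasDerivAt_p : ∀ t ∈ Ico a b, HasDerivAt p (pDot (m2 t) (m3 t) (xi t)) t

namespace IsReducedTwoBodySolution

variable {a b : ℝ} {m1 m2 m3 xi p : ℝ → ℝ}

lemma mono (hs : IsReducedTwoBodySolution a b m1 m2 m3 xi p) {a' : ℝ} (ha : a ≤ a') :
    IsReducedTwoBodySolution a' b m1 m2 m3 xi p where
  hasDerivAt_m1 t ht := hs.hasDerivAt_m1 t (Ico_subset_Ico_left ha ht)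
  hasDerivAt_m2 t ht := hs.hasDerivAt_m2 t (Ico_subset_Ico_left ha ht)
  hasDerivAt_m3 t ht := hs.hasDerivAt_m3 t (Ico_subset_Ico_left ha ht)
  hasDerivAt_xi t ht := hs.hasDerivAt_xi t (Ico_subset_Ico_left ha ht)
  hasDerivAt_p t ht := hs.hasDerivAt_p t (Ico_subset_Ico_left ha ht)

lemma sq_add_sq_add_sq_eq (hs : IsReducedTwoBodySolution a b m1 m2 m3 xi p) :
    ∀ t ∈ Ico a b, m1 t ^ 2 + m2 t ^ 2 + m3 t ^ 2 = m1 a ^ 2 + m2 a ^ 2 + m3 a ^ 2 :=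
  eq_of_hasDerivAt_eq_zero_Ico (f := fun t => m1 t ^ 2 + m2 t ^ 2 + m3 t ^ 2) fun t ht => by
    refine ((((hs.hasDerivAt_m1 t ht).pow 2).add ((hs.hasDerivAt_m2 t ht).pow 2)).add
      ((hs.hasDerivAt_m3 t ht).pow 2)).congr_deriv ?_
    push_cast
    ring

lemma energy_eq (hs : IsReducedTwoBodySolution a b m1 m2 m3 xi p) :
    ∀ t ∈ Ico a b, energy (m1 t) (m2 t) (m3 t) (xi t) (p t) =
      energy (m1 a) (m2 a) (m3 a) (xi a) (p a) :=
  eq_of_hasDerivAt_eq_zero_Ico (f := fun t => energy (m1 t) (m2 t) (m3 t) (xi t) (p t))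
    fun t ht => by
    have hm1 := hs.hasDerivAt_m1 t ht
    have hm2 := hs.hasDerivAt_m2 t ht
    have hm3 := hs.hasDerivAt_m3 t ht
    have hxi := hs.hasDerivAt_xi t ht
    have hp := hs.hasDerivAt_p t ht
    refine (((((hp.pow 2).sub (hm1.mul hp)).add ((hm3.pow 2).mul (hxi.pow 2))).sub
      ((hm2.mul hm3).mul hxi)).sub hxi).congr_deriv ?_
    simp only [xiDot, pDot, Pi.mul_apply, Pi.pow_apply]
    push_cast
    ring

lemma eventually_isNearCollision (hs : IsReducedTwoBodySolution a b m1 m2 m3 xi p)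
    (hab : a < b) (hcoll : Tendsto xi (𝓝[<] b) atTop) :
    ∀ᶠ t in 𝓝[<] b, IsNearCollision (m1 t) (m2 t) (m3 t) (xi t) (p t) := by
  filter_upwards [Ico_mem_nhdsLT hab, hcoll.eventually_gt_atTop 0,
    hcoll.eventually_ge_atTop (1600 * (m1 a ^ 2 + m2 a ^ 2 + m3 a ^ 2)),
    hcoll.eventually_ge_atTop (16 * |energy (m1 a) (m2 a) (m3 a) (xi a) (p a)|)]
    with t ht hpos hL hE
  refine ⟨hpos, ?_, ?_⟩
  · rw [hs.sq_add_sq_add_sq_eq t ht]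
    linarith
  · rw [hs.energy_eq t ht]
    linarith

lemma hasDerivAt_div_sqrt (hs : IsReducedTwoBodySolution a b m1 m2 m3 xi p)
    (hfar : ∀ t ∈ Ico a b, IsNearCollision (m1 t) (m2 t) (m3 t) (xi t) (p t)) :
    ∀ t ∈ Ico a b, HasDerivAt (fun t => p t / √(xi t))
      ((2 * xi t * pDot (m2 t) (m3 t) (xi t) - p t * xiDot (m1 t) (xi t) (p t)) /
        (2 * xi t * √(xi t))) t := fun t ht =>
  (hs.hasDerivAt_p t ht).div_sqrt (hs.hasDerivAt_xi t ht) (hfar t ht).pos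

lemma le_div_sqrt_of_le (hs : IsReducedTwoBodySolution a b m1 m2 m3 xi p)
    (hfar : ∀ t ∈ Ico a b, IsNearCollision (m1 t) (m2 t) (m3 t) (xi t) (p t))
    {c u : ℝ} (hc : |c| ≤ 1 / 2) (hu : u ∈ Ico a b) (hcu : c ≤ p u / √(xi u)) :
    ∀ t ∈ Ico u b, c ≤ p t / √(xi t) := by
  have hsub : Ico u b ⊆ Ico a b := Ico_subset_Ico_left hu.1
  refine le_of_hasDerivAt_pos_of_eq (fun t ht => hs.hasDerivAt_div_sqrt hfar t (hsub ht))
    (fun t ht hct => ?_) hcu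
  have hfar_t := hfar t (hsub ht)
  have := hfar_t.pos
  exact div_pos (hfar_t.two_mul_mul_pDot_sub_pos (hct ▸ hc)) (by positivity)

lemma not_forall_half_le_div_sqrt (hs : IsReducedTwoBodySolution a b m1 m2 m3 xi p)
    (hfar : ∀ t ∈ Ico a b, IsNearCollision (m1 t) (m2 t) (m3 t) (xi t) (p t))
    (hcoll : Tendsto xi (𝓝[<] b) atTop) {u : ℝ} (hu : u ∈ Ico a b) :
    ¬ ∀ t ∈ Ico u b, 1 / 2 ≤ p t / √(xi t) := by
  intro hhalf
  have hsub : Ico u b ⊆ Ico a b := Ico_subset_Ico_left hu.1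
  have hanti : MonotoneOn (fun t => -xi t) (Ico u b) :=
    monotoneOn_Ico_of_hasDerivAt_nonneg (fun t ht => (hs.hasDerivAt_xi t (hsub ht)).neg)
      fun t ht => neg_nonneg.2 ((hfar t (hsub ht)).xiDot_nonpos (hhalf t ht))
  obtain ⟨t, hgt, ht⟩ := ((hcoll.eventually_gt_atTop (xi u)).and (Ico_mem_nhdsLT hu.2)).exists
  linarith [hanti ⟨le_rfl, hu.2⟩ ht ht.1]

/-- While `|p / √ξ| ≤ 1/2`, the ratio grows at least like `(log ξ) / 16`, so it cannot stay
there as `ξ → ∞`. -/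
lemma not_forall_abs_div_sqrt_le_half (hs : IsReducedTwoBodySolution a b m1 m2 m3 xi p)
    (hfar : ∀ t ∈ Ico a b, IsNearCollision (m1 t) (m2 t) (m3 t) (xi t) (p t))
    (hcoll : Tendsto xi (𝓝[<] b) atTop) {u : ℝ} (hu : u ∈ Ico a b) :
    ¬ ∀ t ∈ Ico u b, |p t / √(xi t)| ≤ 1 / 2 := by
  intro hband
  have hsub : Ico u b ⊆ Ico a b := Ico_subset_Ico_left hu.1
  have hmono : MonotoneOn (fun t => p t / √(xi t) - log (xi t) / 16) (Ico u b) :=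
    monotoneOn_Ico_of_hasDerivAt_nonneg
      (fun t ht => (hs.hasDerivAt_div_sqrt hfar t (hsub ht)).sub
        (((hs.hasDerivAt_xi t (hsub ht)).log (hfar t (hsub ht)).pos.ne').div_const 16))
      fun t ht => sub_nonneg.2 ((hfar t (hsub ht)).xiDot_div_le (hband t ht))
  have htop := tendsto_atTop_of_monotoneOn_sub hu.2 hmono
    ((tendsto_log_atTop.comp hcoll).atTop_div_const (by norm_num))
  obtain ⟨t, hgt, ht⟩ := ((htop.eventually_gt_atTop (1 / 2)).and (Ico_mem_nhdsLT hu.2)).exists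
  linarith [le_abs_self (p t / √(xi t)), hband t ht]

lemma div_sqrt_le_neg_half (hs : IsReducedTwoBodySolution a b m1 m2 m3 xi p)
    (hfar : ∀ t ∈ Ico a b, IsNearCollision (m1 t) (m2 t) (m3 t) (xi t) (p t))
    (hcoll : Tendsto xi (𝓝[<] b) atTop) :
    ∀ t ∈ Ico a b, p t / √(xi t) ≤ -(1 / 2) := by
  intro t ht
  by_contra! hlt
  have hsub : Ico t b ⊆ Ico a b := Ico_subset_Ico_left ht.1
  have hlow := hs.le_div_sqrt_of_le hfar (by norm_num) ht hlt.le
  by_cases hhigh : ∃ u ∈ Ico t b, 1 / 2 ≤ p u / √(xi u)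
  · obtain ⟨u, hu, hhalf⟩ := hhigh
    exact hs.not_forall_half_le_div_sqrt hfar hcoll (hsub hu)
      (hs.le_div_sqrt_of_le hfar (by norm_num) (hsub hu) hhalf)
  · push Not at hhigh
    exact hs.not_forall_abs_div_sqrt_le_half hfar hcoll ht
      fun s hst => abs_le.2 ⟨hlow s hst, (hhigh s hst).le⟩

end IsReducedTwoBodySolution

/-- Along a collision solution with `t* < ∞` and `ξ(t) → +∞` as `t → t*⁻`, one has
`p ∼ −√ξ`: eventually `p/√ξ` is bounded and bounded away from zero, i.e. there are
`t₁ ∈ [t₀, t*)` and `0 < δ ≤ M` with `−M ≤ p(t)/√(ξ(t)) ≤ −δ` on `[t₁, t*)`. -/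
theorem p_asymptotic_neg_sqrt_xi
    (t0 tstar : ℝ) (ht0 : t0 < tstar)
    (m1 m2 m3 xi p : ℝ → ℝ)
    (hm1 : ∀ t ∈ Set.Ico t0 tstar,
      HasDerivAt m1 (xi t * (-(m2 t)^2 + (m3 t)^2 + 2 * m2 t * m3 t * xi t)) t)
    (hm2 : ∀ t ∈ Set.Ico t0 tstar,
      HasDerivAt m2 (m1 t * m2 t * xi t - m3 t * p t - 2 * m1 t * m3 t * (xi t)^2) t)
    (hm3 : ∀ t ∈ Set.Ico t0 tstar,
      HasDerivAt m3 (m2 t * p t - m1 t * m3 t * xi t) t)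
    (hxi : ∀ t ∈ Set.Ico t0 tstar,
      HasDerivAt xi (-((xi t)^2 + 1) * (2 * p t - m1 t)) t)
    (hp : ∀ t ∈ Set.Ico t0 tstar,
      HasDerivAt p (-((xi t)^2 + 1) * (1 + m2 t * m3 t - 2 * (m3 t)^2 * xi t)) t)
    (hcoll : Tendsto xi (nhdsWithin tstar (Set.Iio tstar)) atTop) :
    ∃ t1 ∈ Set.Ico t0 tstar, ∃ δ M : ℝ, 0 < δ ∧ δ ≤ M ∧
      ∀ t ∈ Set.Ico t1 tstar,
        -M ≤ p t / Real.sqrt (xi t) ∧ p t / Real.sqrt (xi t) ≤ -δ := by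
  have hs : IsReducedTwoBodySolution t0 tstar m1 m2 m3 xi p := ⟨hm1, hm2, hm3, hxi, hp⟩
  obtain ⟨t1, ht1, hfar⟩ :=
    exists_forall_Ico_of_eventually_nhdsLT ht0 (hs.eventually_isNearCollision ht0 hcoll)
  refine ⟨t1, ht1, 1 / 2, 2, by norm_num, by norm_num, fun t ht =>
    ⟨(hfar t ht).neg_two_le_div_sqrt, (hs.mono ht1.1).div_sqrt_le_neg_half hfar hcoll t ht⟩⟩
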